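/- arXiv:2210.03917 — 2 statements merged into one kernel-verified Lean document; each statement's English description precedes it below -/
import Mathlib

section
/- Let g(y) := inf_{z>0} { y²/z + z·log(z) } for y > 0. Then g(y)/y → ∞ as y → ∞. -/
open Filter Real

/-! For every `a`, the Fenchel–Young inequality `z log z ≥ a² z - exp (a² - 1)` together with
`y² / z + a² z ≥ 2 a y` bounds `g y` below by `2 a y - exp (a² - 1)`, so `g y / y ≥ 2 a - 1`
for large `y`. -/

theorem mul_sub_exp_sub_one_le_mul_log (c : ℝ) {z : ℝ} (hz : 0 < z) :
    c * z - exp (c - 1) ≤ z * log z := by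
  have h := add_one_le_exp (c - 1 - log z)
  rw [exp_sub, exp_log hz, le_div_iff₀ hz] at h
  linarith

theorem two_mul_mul_le_sq_div_add (a y : ℝ) {z : ℝ} (hz : 0 < z) :
    2 * a * y ≤ y ^ 2 / z + a ^ 2 * z := by
  rw [div_add' _ _ _ hz.ne', le_div_iff₀ hz]
  nlinarith [sq_nonneg (y - a * z)]

theorem sub_exp_le_sq_div_add_mul_log (a y : ℝ) {z : ℝ} (hz : 0 < z) :
    2 * a * y - exp (a ^ 2 - 1) ≤ y ^ 2 / z + z * log z := by
  linarith [two_mul_mul_le_sq_div_add a y hz, mul_sub_exp_sub_one_le_mul_log (a ^ 2) hz]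

theorem sub_exp_le_sInf_sq_div_add_mul_log (a y : ℝ) :
    2 * a * y - exp (a ^ 2 - 1) ≤ sInf {v : ℝ | ∃ z > (0 : ℝ), v = y ^ 2 / z + z * log z} := by
  refine le_csInf ⟨_, 1, one_pos, rfl⟩ ?_
  rintro v ⟨z, hz, rfl⟩
  exact sub_exp_le_sq_div_add_mul_log a y hz

theorem g_superlinear
    (g : ℝ → ℝ)
    (hg : ∀ y > (0 : ℝ),
      g y = sInf {v : ℝ | ∃ z > (0 : ℝ), v = y ^ 2 / z + z * Real.log z}) :
    Tendsto (fun y => g y / y) atTop atTop := by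
  rw [tendsto_atTop]
  intro b
  set a := (b + 1) / 2
  filter_upwards [eventually_gt_atTop 0, eventually_ge_atTop (exp (a ^ 2 - 1))] with y hy hy_large
  rw [le_div_iff₀ hy, hg y hy]
  have h_lower := sub_exp_le_sInf_sq_div_add_mul_log a y
  have h_slope : 2 * a * y = b * y + y := by ring
  linarith
end

section
/- Fix ρ > 0, T > 0, x, y ∈ ℝ. Among continuous, a.e.-differentiable functions δ: [0,T] → ℝ with δ(0) = 0, δ(T) = x, and ∫₀ᵀ δ(t) dt = y, the function δ(t) = c₁ sinh(√ρ t) + c₂ sinh(√ρ(T−t)) + c₃, with c₃ = (√ρ·y − x·tanh(√ρ T/2))/(√ρ T − 2 tanh(√ρ T/2)), c₁ = (x − c₃)/sinh(√ρ T), c₂ = −c₃/sinh(√ρ T), satisfies ρ∫₀ᵀ δ² dt + ∫₀ᵀ (δ')² dt = √ρ·( x²·coth(√ρ T) + (x tanh(√ρ T/2) − √ρ y)²/(√ρ T − 2 tanh(√ρ T/2)) ). -/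
/-!
Since `δ'' = ρ (δ - c₃)`, integrating `δ'²` by parts gives
`ρ ∫ δ² + ∫ δ'² = [δ δ']₀ᵀ + ρ c₃ ∫ δ`, and the coefficients are chosen exactly so that
`δ 0 = 0`, `δ T = x` and `∫ δ = y`; the energy is therefore `x δ'(T) + ρ c₃ y`, which is
hyperbolic algebra via `tanh (u / 2) * sinh u = cosh u - 1`. The denominator
`√ρ T - 2 tanh (√ρ T / 2)` is positive because `tanh u < u` for `u > 0`.
-/

open Real

section LinearSecondOrder

variable {f f' : ℝ → ℝ} {ρ c : ℝ}

theorem mul_integral_eq_of_hasDerivAt_deriv (hf' : ∀ t, HasDerivAt f' (ρ * (f t - c)) t)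
    (hf_cont : Continuous f) (a b : ℝ) :
    ρ * ∫ t in a..b, f t = f' b - f' a + ρ * c * (b - a) := by
  have ftc := intervalIntegral.integral_eq_sub_of_hasDerivAt (fun t _ ↦ hf' t)
    ((by fun_prop : Continuous fun t ↦ ρ * (f t - c)).intervalIntegrable a b)
  rw [intervalIntegral.integral_const_mul, intervalIntegral.integral_sub
    (hf_cont.intervalIntegrable a b) intervalIntegrable_const] at ftc
  simp only [intervalIntegral.integral_const, smul_eq_mul] at ftc
  linear_combination ftc

theorem mul_integral_sq_add_integral_deriv_sq (hf : ∀ t, HasDerivAt f (f' t) t)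
    (hf' : ∀ t, HasDerivAt f' (ρ * (f t - c)) t) (a b : ℝ) :
    ρ * (∫ t in a..b, f t ^ 2) + ∫ t in a..b, f' t ^ 2
      = f b * f' b - f a * f' a + ρ * c * ∫ t in a..b, f t := by
  have hf_cont : Continuous f := continuous_iff_continuousAt.2 fun t ↦ (hf t).continuousAt
  have hf'_cont : Continuous f' := continuous_iff_continuousAt.2 fun t ↦ (hf' t).continuousAt
  have parts := intervalIntegral.integral_deriv_mul_eq_sub (a := a) (b := b)
    (fun t _ ↦ hf t) (fun t _ ↦ hf' t) (hf'_cont.intervalIntegrable a b)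
    ((by fun_prop : Continuous fun t ↦ ρ * (f t - c)).intervalIntegrable a b)
  rw [← parts, ← intervalIntegral.integral_const_mul, ← intervalIntegral.integral_const_mul,
    ← intervalIntegral.integral_add, ← intervalIntegral.integral_add]
  · congr 1; ext t; ring
  all_goals exact Continuous.intervalIntegrable (by fun_prop) _ _

end LinearSecondOrder

theorem hasDerivAt_sinh_combination (s T c₁ c₂ c₃ t : ℝ) :
    HasDerivAt (fun t ↦ c₁ * sinh (s * t) + c₂ * sinh (s * (T - t)) + c₃)
      (c₁ * s * cosh (s * t) - c₂ * s * cosh (s * (T - t))) t := by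
  have h := ((((hasDerivAt_id t).const_mul s).sinh.const_mul c₁).add
    ((((hasDerivAt_id t).const_sub T).const_mul s).sinh.const_mul c₂)).add_const c₃
  exact h.congr_deriv (by simp only [id]; ring)

/-- The derivative is written as `ρ * (f t - c)` with `ρ = s ^ 2`, the shape of the ODE
hypothesis in the lemmas above. -/
theorem hasDerivAt_cosh_combination (s T c₁ c₂ c₃ t : ℝ) :
    HasDerivAt (fun t ↦ c₁ * s * cosh (s * t) - c₂ * s * cosh (s * (T - t)))
      (s ^ 2 * (c₁ * sinh (s * t) + c₂ * sinh (s * (T - t)) + c₃ - c₃)) t := by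
  have h := ((((hasDerivAt_id t).const_mul s).cosh.const_mul (c₁ * s)).sub
    ((((hasDerivAt_id t).const_sub T).const_mul s).cosh.const_mul (c₂ * s)))
  exact h.congr_deriv (by simp only [id]; ring)

theorem integral_sinh_combination {s : ℝ} (hs : s ≠ 0) (T c₁ c₂ c₃ : ℝ) :
    ∫ t in (0 : ℝ)..T, (c₁ * sinh (s * t) + c₂ * sinh (s * (T - t)) + c₃)
      = (c₁ + c₂) * (cosh (s * T) - 1) / s + c₃ * T := by
  have h := mul_integral_eq_of_hasDerivAt_deriv
    (f := fun t ↦ c₁ * sinh (s * t) + c₂ * sinh (s * (T - t)) + c₃)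
    (hasDerivAt_cosh_combination s T c₁ c₂ c₃) (by fun_prop) 0 T
  refine mul_left_cancel₀ (pow_ne_zero 2 hs) (h.trans ?_)
  simp only [mul_zero, cosh_zero, sub_zero, sub_self]
  field_simp
  ring

theorem tanh_half_mul_sinh (u : ℝ) : tanh (u / 2) * sinh u = cosh u - 1 := by
  obtain ⟨v, rfl⟩ : ∃ v, u = 2 * v := ⟨u / 2, by ring⟩
  rw [mul_div_cancel_left₀ v two_ne_zero, tanh_eq_sinh_div_cosh, sinh_two_mul, cosh_two_mul]
  have hc := (cosh_pos v).ne'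
  field_simp
  linear_combination -cosh_sq_sub_sinh_sq v

theorem sinh_lt_mul_cosh {u : ℝ} (hu : 0 < u) : sinh u < u * cosh u := by
  have hmono : StrictMonoOn (fun v ↦ v * cosh v - sinh v) (Set.Ici 0) := by
    refine strictMonoOn_of_deriv_pos (convex_Ici 0) (by fun_prop) fun v hv ↦ ?_
    rw [interior_Ici] at hv
    have hd : HasDerivAt (fun v ↦ v * cosh v - sinh v) (v * sinh v) v :=
      (((hasDerivAt_id v).mul (hasDerivAt_cosh v)).sub (hasDerivAt_sinh v)).congr_deriv
        (by simp only [id]; ring)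
    rw [hd.deriv]
    exact mul_pos hv (sinh_pos_iff.2 hv)
  simpa using hmono Set.self_mem_Ici hu.le hu

theorem tanh_lt_self {u : ℝ} (hu : 0 < u) : tanh u < u := by
  rw [tanh_eq_sinh_div_cosh, div_lt_iff₀ (cosh_pos u)]
  exact sinh_lt_mul_cosh hu

theorem energy_value_at_EL_solution (ρ T x y : ℝ) (hρ : 0 < ρ) (hT : 0 < T)
    (c₁ c₂ c₃ : ℝ)
    (hc₃ : c₃ = (Real.sqrt ρ * y - x * tanh (Real.sqrt ρ * T / 2)) /
      (Real.sqrt ρ * T - 2 * tanh (Real.sqrt ρ * T / 2)))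
    (hc₁ : c₁ = (x - c₃) / sinh (Real.sqrt ρ * T))
    (hc₂ : c₂ = -c₃ / sinh (Real.sqrt ρ * T))
    (δ δ' : ℝ → ℝ)
    (hδ : δ = fun t => c₁ * sinh (Real.sqrt ρ * t) + c₂ * sinh (Real.sqrt ρ * (T - t)) + c₃)
    (hδ' : δ' = fun t => c₁ * Real.sqrt ρ * cosh (Real.sqrt ρ * t)
      - c₂ * Real.sqrt ρ * cosh (Real.sqrt ρ * (T - t))) :
    ρ * (∫ t in (0 : ℝ)..T, (δ t) ^ 2) + (∫ t in (0 : ℝ)..T, (δ' t) ^ 2)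
      = Real.sqrt ρ * (x ^ 2 * (cosh (Real.sqrt ρ * T) / sinh (Real.sqrt ρ * T))
          + (x * tanh (Real.sqrt ρ * T / 2) - Real.sqrt ρ * y) ^ 2 /
            (Real.sqrt ρ * T - 2 * tanh (Real.sqrt ρ * T / 2))) := by
  set s := Real.sqrt ρ
  have hs : 0 < s := Real.sqrt_pos.2 hρ
  have hρs : ρ = s ^ 2 := (Real.sq_sqrt hρ.le).symm
  have hsinh : 0 < sinh (s * T) := sinh_pos_iff.2 (by positivity)
  have hD : 0 < s * T - 2 * tanh (s * T / 2) := by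
    linarith [tanh_lt_self (u := s * T / 2) (by positivity)]
  have hτ := tanh_half_mul_sinh (s * T)
  have hc₃D : c₃ * (s * T - 2 * tanh (s * T / 2)) = s * y - x * tanh (s * T / 2) := by
    rw [hc₃, div_mul_cancel₀ _ hD.ne']
  have hc₁' : c₁ * sinh (s * T) = x - c₃ := by rw [hc₁, div_mul_cancel₀ _ hsinh.ne']
  have hc₂' : c₂ * sinh (s * T) = -c₃ := by rw [hc₂, div_mul_cancel₀ _ hsinh.ne']
  have hδ_deriv : ∀ t, HasDerivAt δ (δ' t) t := by
    subst hδ hδ'; exact hasDerivAt_sinh_combination s T c₁ c₂ c₃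
  have hδ'_deriv : ∀ t, HasDerivAt δ' (ρ * (δ t - c₃)) t := by
    subst hδ hδ'; rw [hρs]; exact hasDerivAt_cosh_combination s T c₁ c₂ c₃
  have hδ_zero : δ 0 = 0 := by
    simp only [hδ, mul_zero, sinh_zero, sub_zero, hc₂']; ring
  have hδ_T : δ T = x := by
    simp only [hδ, sub_self, mul_zero, sinh_zero, hc₁']; ring
  have hδ_mean : ∫ t in (0 : ℝ)..T, δ t = y := by
    rw [hδ, integral_sinh_combination hs.ne', ← hτ]
    field_simp
    linear_combination tanh (s * T / 2) * (hc₁' + hc₂') + hc₃D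
  rw [mul_integral_sq_add_integral_deriv_sq hδ_deriv hδ'_deriv, hδ_zero, hδ_T, hδ_mean]
  have hquot : (x * tanh (s * T / 2) - s * y) ^ 2 / (s * T - 2 * tanh (s * T / 2))
      = c₃ * (s * y - x * tanh (s * T / 2)) := by
    rw [div_eq_iff hD.ne']
    linear_combination (x * tanh (s * T / 2) - s * y) * hc₃D
  rw [hquot, hδ', hρs]
  simp only [sub_self, mul_zero, cosh_zero, mul_one, zero_mul, sub_zero]
  field_simp
  linear_combination x * cosh (s * T) * hc₁' - x * hc₂' + x * c₃ * hτ
end
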